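/- Let A be a finite-dimensional algebra over a field k, X an A-module, and Y a nonzero uniserial submodule of X with Loewy layers rad^{i-1}(Y)/rad^i(Y) ≅ S_i for i = 1,…,n, where each S_i is simple. Set X̄ = X/Y. Then for each j, the Loewy layer rad^{j-1}(X)/rad^j(X) is isomorphic either to rad^{j-1}(X̄)/rad^j(X̄) or to rad^{j-1}(X̄)/rad^j(X̄) ⊕ S_i for some i. -/

import Mathlib

universe u v

/-- The Jacobson radical of the ring `A`: the intersection of the maximal (left) ideals. -/
def jacIdeal (A : Type u) [Ring A] : Ideal A :=
  sInf {I : Ideal A | I.IsMaximal}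

/-- The powers `rad^i(M) = M · rad(A)^i` of the radical of a module. -/
def radPow (A : Type u) [Ring A] (M : Type v) [AddCommGroup M] [Module A M] :
    ℕ → Submodule A M
  | 0 => ⊤
  | n + 1 => Submodule.span A {x : M | ∃ a ∈ jacIdeal A, ∃ m ∈ radPow A M n, x = a • m}

/-- The `(j+1)`-st Loewy layer `rad^j(M)/rad^(j+1)(M)` of a module. -/
abbrev loewyLayer (A : Type u) [Ring A] (M : Type v) [AddCommGroup M] [Module A M] (j : ℕ) :=
  ↥(radPow A M j) ⧸ Submodule.comap (radPow A M j).subtype (radPow A M (j + 1))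

/-! Since the Loewy layers of `Y` are simple, the radical series of `Y` has simple or zero steps,
and as `rad` sends `Y ∩ rad^i X` into `rad^(i+1) X`, every `Y ∩ rad^j X` is a radical power
`rad^m Y`, while `Y ∩ rad^(j+1) X` is `rad^m Y` or `rad^(m+1) Y`. The `j`-th Loewy layer of `X` is
an extension of that of `X/Y` by `(Y ∩ rad^j X)/(Y ∩ rad^(j+1) X)`, which is therefore zero or
`S_m`, and the extension splits because Loewy layers are killed by the Jacobson radical of the
Artinian ring `A`, hence semisimple. -/

section RadPow

variable {A : Type u} [Ring A] {M N : Type*} [AddCommGroup M] [Module A M]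
  [AddCommGroup N] [Module A N]

theorem jacIdeal_eq_jacobson : jacIdeal A = Ring.jacobson A :=
  (Ring.jacobson_eq_sInf_isMaximal A).symm

theorem smul_mem_radPow {a : A} (ha : a ∈ jacIdeal A) {j : ℕ} {x : M}
    (hx : x ∈ radPow A M j) : a • x ∈ radPow A M (j + 1) :=
  Submodule.subset_span ⟨a, ha, x, hx, rfl⟩

theorem map_radPow_succ_le (f : M →ₗ[A] N) {i j : ℕ}
    (h : (radPow A M i).map f ≤ radPow A N j) :
    (radPow A M (i + 1)).map f ≤ radPow A N (j + 1) := by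
  rw [radPow, Submodule.map_span, Submodule.span_le]
  rintro _ ⟨_, ⟨a, ha, x, hx, rfl⟩, rfl⟩
  rw [map_smul]
  exact smul_mem_radPow ha (h ⟨x, hx, rfl⟩)

theorem map_radPow_le (f : M →ₗ[A] N) (j : ℕ) : (radPow A M j).map f ≤ radPow A N j := by
  induction j with
  | zero => exact le_top
  | succ j ih => exact map_radPow_succ_le f ih

theorem map_radPow_of_surjective {f : M →ₗ[A] N} (hf : Function.Surjective f) (j : ℕ) :
    (radPow A M j).map f = radPow A N j := by
  refine le_antisymm (map_radPow_le f j) ?_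
  induction j with
  | zero => rw [radPow, radPow, Submodule.map_top, LinearMap.range_eq_top.2 hf]
  | succ j ih =>
    rw [radPow, Submodule.span_le]
    rintro _ ⟨a, ha, _, hy, rfl⟩
    obtain ⟨x, hx, rfl⟩ := ih hy
    rw [← map_smul]
    exact Submodule.mem_map_of_mem (smul_mem_radPow ha hx)

theorem radPow_succ_le (j : ℕ) : radPow A M (j + 1) ≤ radPow A M j := by
  induction j with
  | zero => exact le_top
  | succ j ih => simpa using map_radPow_succ_le LinearMap.id (by simpa using ih)

theorem radPow_antitone : Antitone (radPow A M) :=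
  antitone_nat_of_succ_le radPow_succ_le

theorem radPow_eq_bot_of_le {n k : ℕ} (hn : radPow A M n = ⊥) (hk : n ≤ k) :
    radPow A M k = ⊥ :=
  le_bot_iff.1 (hn ▸ radPow_antitone hk)

theorem radPow_succ_covBy {j : ℕ} (h : IsSimpleModule A (loewyLayer A M j)) :
    radPow A M (j + 1) ⋖ radPow A M j :=
  (covBy_iff_quot_is_simple (radPow_succ_le j)).2 h

theorem radPow_succ_wcovBy {n : ℕ} (hsimple : ∀ i < n, IsSimpleModule A (loewyLayer A M i))
    (hn : radPow A M n = ⊥) (i : ℕ) : radPow A M (i + 1) ⩿ radPow A M i := by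
  by_cases hi : i < n
  · exact (radPow_succ_covBy (hsimple i hi)).wcovBy
  · rw [radPow_eq_bot_of_le hn (not_lt.1 hi), radPow_eq_bot_of_le hn (by omega)]
    exact WCovBy.refl _

theorem comap_radPow_succ_eq_or_eq (f : M →ₗ[A] N) {i j : ℕ}
    (hM : radPow A M (i + 1) ⩿ radPow A M i) (hi : (radPow A N j).comap f = radPow A M i) :
    (radPow A N (j + 1)).comap f = radPow A M (i + 1) ∨
      (radPow A N (j + 1)).comap f = radPow A M i := by
  refine hM.eq_or_eq ?_ (hi ▸ Submodule.comap_mono (radPow_succ_le j))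
  exact Submodule.map_le_iff_le_comap.1 <|
    map_radPow_succ_le f (Submodule.map_le_iff_le_comap.2 hi.ge)

theorem exists_comap_radPow_eq (f : M →ₗ[A] N)
    (hM : ∀ i, radPow A M (i + 1) ⩿ radPow A M i) (j : ℕ) :
    ∃ i, (radPow A N j).comap f = radPow A M i := by
  induction j with
  | zero => exact ⟨0, Submodule.comap_top f⟩
  | succ j ih =>
    obtain ⟨i, hi⟩ := ih
    rcases comap_radPow_succ_eq_or_eq f (hM i) hi with h | h
    exacts [⟨i + 1, h⟩, ⟨i, h⟩]

end RadPow

section Semisimple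

variable {A : Type u} [Ring A] [IsSemisimpleRing (A ⧸ Ring.jacobson A)]
  {M : Type*} [AddCommGroup M] [Module A M]

theorem isSemisimpleModule_of_jacobson_smul_eq_zero
    (h : ∀ a ∈ Ring.jacobson A, ∀ x : M, a • x = 0) : IsSemisimpleModule A M := by
  have hM : Module.IsTorsionBySet A M (Ring.jacobson A) := fun x a => h a a.2 x
  let := hM.module
  let l : M →ₛₗ[Ideal.Quotient.mk (Ring.jacobson A)] M :=
    { toFun := id
      map_add' := fun _ _ => rfl
      map_smul' := fun a x => (hM.mk_smul a x).symm }
  exact (l.isSemisimpleModule_iff_of_bijective Function.bijective_id).2 inferInstance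

theorem isSemisimpleModule_loewyLayer (j : ℕ) : IsSemisimpleModule A (loewyLayer A M j) := by
  refine isSemisimpleModule_of_jacobson_smul_eq_zero fun a ha x => ?_
  obtain ⟨y, rfl⟩ := Submodule.Quotient.mk_surjective _ x
  rw [← Submodule.Quotient.mk_smul, Submodule.Quotient.mk_eq_zero]
  exact smul_mem_radPow ((jacIdeal_eq_jacobson (A := A)).ge ha) y.2

end Semisimple

theorem nonempty_linearEquiv_prod_of_exact {R : Type*} [Ring R] {K E F : Type*}
    [AddCommGroup K] [Module R K] [AddCommGroup E] [Module R E] [AddCommGroup F] [Module R F]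
    [IsSemisimpleModule R E] {f : K →ₗ[R] E} {g : E →ₗ[R] F} (hf : Function.Injective f)
    (hg : Function.Surjective g) (hfg : Function.Exact f g) : Nonempty (E ≃ₗ[R] F × K) := by
  obtain ⟨c, hc⟩ := exists_isCompl (LinearMap.ker g)
  have eK : LinearMap.ker g ≃ₗ[R] K :=
    LinearEquiv.ofEq _ _ hfg.linearMap_ker_eq ≪≫ₗ (LinearEquiv.ofInjective f hf).symm
  have eF : c ≃ₗ[R] F :=
    (Submodule.quotientEquivOfIsCompl _ c hc).symm ≪≫ₗ g.quotKerEquivOfSurjective hg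
  exact ⟨(Submodule.prodEquivOfIsCompl _ _ hc).symm ≪≫ₗ eK.prodCongr eF ≪≫ₗ
    LinearEquiv.prodComm R K F⟩

section Subquotient

variable {A : Type u} [Ring A] {M N : Type*} [AddCommGroup M] [Module A M]
  [AddCommGroup N] [Module A N]

def subquotMap (f : M →ₗ[A] N) {P P' : Submodule A M} {Q Q' : Submodule A N}
    (hP : P ≤ Q.comap f) (hP' : P' ≤ Q'.comap f) :
    (↥P ⧸ P'.comap P.subtype) →ₗ[A] (↥Q ⧸ Q'.comap Q.subtype) :=
  Submodule.mapQ _ _ (f.restrict hP) fun _ hx => hP' hx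

variable {f : M →ₗ[A] N} {P P' : Submodule A M} {Q Q' : Submodule A N}
  {hP : P ≤ Q.comap f} {hP' : P' ≤ Q'.comap f}

@[simp]
theorem subquotMap_mk (x : P) :
    subquotMap f hP hP' (Submodule.Quotient.mk x) = Submodule.Quotient.mk ⟨f x, hP x.2⟩ :=
  rfl

theorem subquotMap_surjective (h : Q ≤ P.map f) : Function.Surjective (subquotMap f hP hP') := by
  intro z
  obtain ⟨y, rfl⟩ := Submodule.Quotient.mk_surjective _ z
  obtain ⟨x, hx, hxy⟩ := h y.2
  exact ⟨Submodule.Quotient.mk ⟨x, hx⟩, congrArg Submodule.Quotient.mk (Subtype.ext hxy)⟩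

theorem subquotMap_injective (h : P ⊓ Q'.comap f ≤ P') :
    Function.Injective (subquotMap f hP hP') := by
  refine (injective_iff_map_eq_zero _).2 fun z hz => ?_
  obtain ⟨x, rfl⟩ := Submodule.Quotient.mk_surjective _ z
  rw [subquotMap_mk, Submodule.Quotient.mk_eq_zero] at hz
  exact (Submodule.Quotient.mk_eq_zero _).2 (h ⟨x.2, hz⟩)

end Subquotient

section Extension

variable {A : Type u} [Ring A] {X : Type*} [AddCommGroup X] [Module A X] {Y : Submodule A X}
  {R R' : Submodule A X}

theorem exact_subquotMap_subtype_mkQ (hR : R' ≤ R) :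
    Function.Exact
      (subquotMap Y.subtype (P := R.comap Y.subtype) (P' := R'.comap Y.subtype) le_rfl le_rfl)
      (subquotMap Y.mkQ (Q := R.map Y.mkQ) (Q' := R'.map Y.mkQ)
        (Submodule.le_comap_map _ _) (Submodule.le_comap_map _ _)) := by
  intro z
  obtain ⟨x, rfl⟩ := Submodule.Quotient.mk_surjective _ z
  rw [subquotMap_mk, Submodule.Quotient.mk_eq_zero]
  change (x : X) ∈ (R'.map Y.mkQ).comap Y.mkQ ↔ _
  rw [Submodule.comap_map_mkQ, Submodule.mem_sup]
  constructor
  · rintro ⟨y, hy, r, hr, hyr⟩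
    obtain rfl : y = x - r := eq_sub_of_add_eq hyr
    refine ⟨Submodule.Quotient.mk ⟨⟨_, hy⟩, R.sub_mem x.2 (hR hr)⟩, ?_⟩
    rw [subquotMap_mk, Submodule.Quotient.eq]
    change (x : X) - r - x ∈ R'
    rw [sub_sub_cancel_left]
    exact R'.neg_mem hr
  · rintro ⟨w, hw⟩
    obtain ⟨y, rfl⟩ := Submodule.Quotient.mk_surjective _ w
    rw [subquotMap_mk, Submodule.Quotient.eq] at hw
    refine ⟨y, y.1.2, (x : X) - y, by simpa using R'.neg_mem hw, add_sub_cancel _ _⟩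

theorem nonempty_subquot_equiv_prod {P P' : Submodule A Y} {T T' : Submodule A (X ⧸ Y)}
    [IsSemisimpleModule A (↥R ⧸ R'.comap R.subtype)] (hR : R' ≤ R)
    (hP : R.comap Y.subtype = P) (hP' : R'.comap Y.subtype = P')
    (hT : R.map Y.mkQ = T) (hT' : R'.map Y.mkQ = T') :
    Nonempty ((↥R ⧸ R'.comap R.subtype) ≃ₗ[A]
      (↥T ⧸ T'.comap T.subtype) × (↥P ⧸ P'.comap P.subtype)) := by
  subst hP hP' hT hT'
  exact nonempty_linearEquiv_prod_of_exact
    (subquotMap_injective fun _ h => h.2) (subquotMap_surjective le_rfl)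
    (exact_subquotMap_subtype_mkQ hR)

end Extension

section Loewy

variable {A : Type u} [Ring A] [IsSemisimpleRing (A ⧸ Ring.jacobson A)]
  {X : Type*} [AddCommGroup X] [Module A X] {Y : Submodule A X}

theorem nonempty_loewyLayer_equiv_prod {j : ℕ} {P P' : Submodule A Y}
    (hP : (radPow A X j).comap Y.subtype = P) (hP' : (radPow A X (j + 1)).comap Y.subtype = P') :
    Nonempty (loewyLayer A X j ≃ₗ[A] loewyLayer A (X ⧸ Y) j × (↥P ⧸ P'.comap P.subtype)) :=
  have := isSemisimpleModule_loewyLayer (A := A) (M := X) j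
  nonempty_subquot_equiv_prod (radPow_succ_le j) hP hP'
    (map_radPow_of_surjective Y.mkQ_surjective j)
    (map_radPow_of_surjective Y.mkQ_surjective (j + 1))

theorem nonempty_loewyLayer_equiv_of_comap_eq {j : ℕ}
    (h : (radPow A X (j + 1)).comap Y.subtype = (radPow A X j).comap Y.subtype) :
    Nonempty (loewyLayer A X j ≃ₗ[A] loewyLayer A (X ⧸ Y) j) := by
  obtain ⟨e⟩ := nonempty_loewyLayer_equiv_prod rfl h
  exact ⟨e ≪≫ₗ (LinearEquiv.refl A _).prodCongr
    (Submodule.quotEquivOfEq _ ⊤ (Submodule.comap_subtype_self _)) ≪≫ₗ LinearEquiv.prodUnique⟩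

end Loewy

theorem loewy_layers_of_quotient_by_uniserial_general
    (k : Type u) (A : Type u) [Field k] [Ring A] [Algebra k A] [FiniteDimensional k A]
    (X : Type u) [AddCommGroup X] [Module A X]
    (Y : Submodule A X)
    (n : ℕ) (S : Fin n → Type u) [∀ i, AddCommGroup (S i)] [∀ i, Module A (S i)]
    (hsimple : ∀ i, IsSimpleModule A (S i))
    (hlayers : ∀ i : Fin n, Nonempty (loewyLayer A (↥Y) (i : ℕ) ≃ₗ[A] S i))
    (hlength : radPow A (↥Y) n = ⊥) :
    ∀ j : ℕ, Nonempty (loewyLayer A X j ≃ₗ[A] loewyLayer A (X ⧸ Y) j) ∨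
      ∃ i : Fin n, Nonempty (loewyLayer A X j ≃ₗ[A] (loewyLayer A (X ⧸ Y) j × S i)) := by
  have : IsArtinianRing A := IsArtinianRing.of_finite k A
  have hcov : ∀ i, radPow A Y (i + 1) ⩿ radPow A Y i :=
    radPow_succ_wcovBy (fun i hi => IsSimpleModule.congr (hlayers ⟨i, hi⟩).some) hlength
  intro j
  obtain ⟨m, hm⟩ := exists_comap_radPow_eq Y.subtype hcov j
  by_cases htriv : (radPow A X (j + 1)).comap Y.subtype = radPow A Y m
  · exact .inl (nonempty_loewyLayer_equiv_of_comap_eq (htriv.trans hm.symm))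
  have hW := (comap_radPow_succ_eq_or_eq Y.subtype (hcov m) hm).resolve_right htriv
  have hmn : m < n := by
    by_contra! h
    exact htriv (by rw [hW, radPow_eq_bot_of_le hlength h, radPow_eq_bot_of_le hlength (by omega)])
  obtain ⟨e⟩ := nonempty_loewyLayer_equiv_prod hm hW
  exact .inr ⟨⟨m, hmn⟩, ⟨e ≪≫ₗ (LinearEquiv.refl A _).prodCongr (hlayers ⟨m, hmn⟩).some⟩⟩

/-- Lemma 2.1(i): Let `Y` be a nonzero uniserial submodule of `X` with simple Loewy
layers `S 0, …, S (n-1)` (so `Y` has Loewy length `n`).  Then each Loewy layer of `X` is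
isomorphic to the corresponding Loewy layer of `X/Y`, possibly with one extra summand
`S i`. -/
theorem loewy_layers_of_quotient_by_uniserial
    (k : Type u) (A : Type u) [Field k] [Ring A] [Algebra k A] [FiniteDimensional k A]
    (X : Type u) [AddCommGroup X] [Module A X] [Module.Finite A X]
    (Y : Submodule A X) (hY0 : Y ≠ ⊥)
    (huniserial : ∀ N₁ N₂ : Submodule A ↥Y, N₁ ≤ N₂ ∨ N₂ ≤ N₁)
    (n : ℕ) (S : Fin n → Type u) [∀ i, AddCommGroup (S i)] [∀ i, Module A (S i)]
    (hsimple : ∀ i, IsSimpleModule A (S i))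
    (hlayers : ∀ i : Fin n, Nonempty (loewyLayer A (↥Y) (i : ℕ) ≃ₗ[A] S i))
    (hlength : radPow A (↥Y) n = ⊥) :
    ∀ j : ℕ, Nonempty (loewyLayer A X j ≃ₗ[A] loewyLayer A (X ⧸ Y) j) ∨
      ∃ i : Fin n, Nonempty (loewyLayer A X j ≃ₗ[A] (loewyLayer A (X ⧸ Y) j × S i)) :=
  loewy_layers_of_quotient_by_uniserial_general k A X Y n S hsimple hlayers hlength
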